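/- Let λ > 0 and let J(x) denote the 3×3 Jacobian matrix of the reduced vector field F at x ∈ ℝ³ (variables ordered S, U, P). Then at the critical point P₁ = (−1/(2√3), 0, 0), J(P₁) is the diagonal matrix diag(−1/2, 1/2, −1/2). In particular the linearization at P₁ has eigenvalues −1/2 (in the S and P directions) and +1/2 (in the U direction), so P₁ is hyperbolic of saddle type, unstable both to the future and the past. -/

import Mathlib

/-- The reduced vector field `F : ℝ³ → ℝ³` in the variables `(S, U, P)`. -/
noncomputable def Fvec (lam : ℝ) (x : Fin 3 → ℝ) : Fin 3 → ℝ :=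
  ![-1 / (3 * Real.sqrt 3) - (2 / 3) * x 0 + x 0 ^ 2 / Real.sqrt 3
      + x 1 ^ 2 / Real.sqrt 3 + x 2 ^ 2 / (2 * Real.sqrt 3)
      + 2 * x 0 ^ 3 - x 0 * x 1 ^ 2 + x 0 * x 2 ^ 2,
    x 1 * (1 / 3 - (lam / 2) * x 2 + 2 * x 0 ^ 2 - x 1 ^ 2 + x 2 ^ 2),
    -(2 / 3) * x 2 + lam * x 1 ^ 2 + 2 * x 0 ^ 2 * x 2 - x 1 ^ 2 * x 2
      + x 2 ^ 3]

/-- The Jacobian matrix of `F` at `x`: entry `(i, j)` is the partial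
derivative of the `i`-th component with respect to the `j`-th variable. -/
noncomputable def jac (lam : ℝ) (x : Fin 3 → ℝ) : Matrix (Fin 3) (Fin 3) ℝ :=
  Matrix.of fun i j => deriv (fun s => Fvec lam (Function.update x j s) i) (x j)


/-! Every entry of the Jacobian is an explicit polynomial in `S, U, P`. At `P₁` the coordinates
`U` and `P` vanish, which kills all off-diagonal entries, and the diagonal ones reduce
to rational numbers through `S² = 1/12` and `S/√3 = -1/6`. -/

open Real

theorem jac_eq (lam : ℝ) (x : Fin 3 → ℝ) :
    jac lam x = !![-(2 / 3) + 2 * x 0 / √3 + 6 * x 0 ^ 2 - x 1 ^ 2 + x 2 ^ 2,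
        2 * x 1 / √3 - 2 * x 0 * x 1, x 2 / √3 + 2 * x 0 * x 2;
      4 * x 0 * x 1, 1 / 3 - lam / 2 * x 2 + 2 * x 0 ^ 2 - 3 * x 1 ^ 2 + x 2 ^ 2,
        x 1 * (2 * x 2 - lam / 2);
      4 * x 0 * x 2, 2 * x 1 * (lam - x 2), -(2 / 3) + 2 * x 0 ^ 2 - x 1 ^ 2 + 3 * x 2 ^ 2] := by
  ext i j
  fin_cases i <;> fin_cases j <;>
    simp (disch := fun_prop) [jac, Fvec, Function.update, -mul_eq_mul_left_iff,
      -mul_eq_mul_right_iff] <;> ring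

theorem jacobian_at_P1_general (lam : ℝ) :
    jac lam ![-1 / (2 * Real.sqrt 3), 0, 0]
      = Matrix.diagonal ![-(1 / 2), 1 / 2, -(1 / 2)] := by
  have hS_sq : (-1 / (2 * √3)) ^ 2 = 1 / 12 := by
    rw [div_pow, mul_pow, sq_sqrt zero_le_three]; norm_num
  have hS_div : -1 / (2 * √3) / √3 = -1 / 6 := by
    rw [div_div, mul_assoc, mul_self_sqrt zero_le_three]; norm_num
  rw [jac_eq]
  ext i j
  fin_cases i <;> fin_cases j <;> simp [hS_sq, mul_div_assoc, hS_div] <;> norm_num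

/-- For `λ > 0` the Jacobian of the reduced vector field at
the critical point `P₁ = (−1/(2√3), 0, 0)` is the diagonal matrix
`diag(−1/2, 1/2, −1/2)`; in particular the linearization at `P₁` has
eigenvalues `−1/2` (in the `S`- and `P`-directions) and `+1/2` (in the
`U`-direction), so `P₁` is a hyperbolic saddle, unstable both to the future
and to the past. -/
theorem jacobian_at_P1 (lam : ℝ) (hlam : 0 < lam) :
    jac lam ![-1 / (2 * Real.sqrt 3), 0, 0]
      = Matrix.diagonal ![-(1 / 2), 1 / 2, -(1 / 2)] :=
  jacobian_at_P1_general lam
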